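/- For every real number t with 0 < t < 2, there exists at most one real number x in the open interval (0, π/4) satisfying (2·sin(x)·cos(2x)) / (1 + 2·sin(x)·sin(2x)) = tan(t·x). -/

import Mathlib

/-!
Write `θ = (t + 2) x`. Clearing denominators, the equation says `sin (t x) = 2 sin x cos θ`,
and expanding `sin (t x) = sin (θ - 2x)` turns this into
`tan θ = (2 sin x + sin 2x) / cos 2x`, with `0 < θ < π/2` forced by the signs. So every root is
a solution of `(t + 2) x = φ x` for `φ x = arctan ((2 sin x + sin 2x) / cos 2x)`. Its derivative
is a rational function of `cos x` that is increasing on `[0, 1]`, so `φ` is strictly concave on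
`[0, π/4)`; as `φ 0 = 0`, the secant slope `φ x / x` is strictly decreasing and takes the value
`t + 2` at most once.
-/

open Real

theorem StrictConcaveOn.eq_of_map_eq_mul {𝕜 : Type*} [Field 𝕜] [LinearOrder 𝕜]
    [IsStrictOrderedRing 𝕜] {s : Set 𝕜} {f : 𝕜 → 𝕜} (hf : StrictConcaveOn 𝕜 s f)
    (h0 : 0 ∈ s) (hf0 : f 0 = 0) {c x y : 𝕜} (hx : x ∈ s) (hy : y ∈ s) (hx0 : x ≠ 0)
    (hy0 : y ≠ 0) (hfx : f x = c * x) (hfy : f y = c * y) : x = y := by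
  have slope_eq {z : 𝕜} (hz0 : z ≠ 0) (hfz : f z = c * z) : (f z - f 0) / (z - 0) = c := by
    rw [hfz, hf0, sub_zero, sub_zero, mul_div_cancel_right₀ c hz0]
  by_contra hxy
  rcases lt_or_gt_of_ne hxy with hxy | hyx
  · have := hf.secant_strict_mono h0 hx hy hx0 hy0 hxy
    rw [slope_eq hx0 hfx, slope_eq hy0 hfy] at this
    exact this.false
  · have := hf.secant_strict_mono h0 hy hx hy0 hx0 hyx
    rw [slope_eq hx0 hfx, slope_eq hy0 hfy] at this
    exact this.false

theorem eq_arctan_div_of_sin_mul_eq_cos_mul {θ a b : ℝ} (hθ0 : 0 < θ) (hθπ : θ < π)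
    (ha : 0 < a) (hb : 0 < b) (h : sin θ * b = cos θ * a) : θ = arctan (a / b) := by
  have hcos : 0 < cos θ := by
    have : 0 < cos θ * a := h ▸ mul_pos (sin_pos_of_pos_of_lt_pi hθ0 hθπ) hb
    exact pos_of_mul_pos_left this ha.le
  have hθ : θ < π / 2 := by
    by_contra! h'
    linarith [cos_nonpos_of_pi_div_two_le_of_le h' (by linarith)]
  rw [← arctan_tan (by linarith) hθ, tan_eq_sin_div_cos,
    (div_eq_div_iff hcos.ne' hb.ne').mpr (by rw [h, mul_comm])]

noncomputable def phase (u : ℝ) : ℝ := arctan ((2 * sin u + sin (2 * u)) / cos (2 * u))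

noncomputable def phaseSlope (c : ℝ) : ℝ :=
  (2 + 6 * c - 4 * c ^ 3) / (5 + 8 * c - 4 * c ^ 2 - 8 * c ^ 3)

theorem hasDerivAt_phase {u : ℝ} (hu : cos (2 * u) ≠ 0) :
    HasDerivAt phase (phaseSlope (cos u)) u := by
  have h2 : HasDerivAt (fun v : ℝ => 2 * v) 2 u := by
    simpa using (hasDerivAt_id u).const_mul (2 : ℝ)
  have hnum : HasDerivAt (fun v => 2 * sin v + sin (2 * v)) (2 * cos u + cos (2 * u) * 2) u :=
    ((hasDerivAt_sin u).const_mul 2).add ((hasDerivAt_sin _).comp u h2)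
  have hden : HasDerivAt (fun v => cos (2 * v)) (-sin (2 * u) * 2) u :=
    (hasDerivAt_cos _).comp u h2
  refine (hnum.div hden hu).arctan.congr_deriv ?_
  simp only [Pi.div_apply]
  have hs : sin u ^ 2 = 1 - cos u ^ 2 := sin_sq u
  rw [sin_two_mul, cos_two_mul] at *
  -- the denominator of `phaseSlope` is `cos² 2u + (2 sin u + sin 2u)²`
  have hD : 5 + 8 * cos u - 4 * cos u ^ 2 - 8 * cos u ^ 3
      = (2 * cos u ^ 2 - 1) ^ 2 + (2 * sin u + 2 * sin u * cos u) ^ 2 := by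
    linear_combination (-4 * (1 + cos u) ^ 2) * hs
  rw [phaseSlope, hD]
  field_simp
  linear_combination (8 * cos u * (1 + cos u)) * hs

theorem phaseSlope_strictMonoOn : StrictMonoOn phaseSlope (Set.Icc 0 1) := by
  rintro a ⟨ha0, ha1⟩ b ⟨hb0, hb1⟩ hab
  have hDa : 0 < 5 + 8 * a - 4 * a ^ 2 - 8 * a ^ 3 := by nlinarith
  have hDb : 0 < 5 + 8 * b - 4 * b ^ 2 - 8 * b ^ 3 := by nlinarith
  have hR : 0 < 14 + 8 * a - 4 * a ^ 2 + b * (8 + 20 * a + 16 * a ^ 2)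
      + b ^ 2 * (-4 + 16 * a + 16 * a ^ 2) := by nlinarith
  rw [phaseSlope, phaseSlope, div_lt_div_iff₀ hDa hDb]
  linear_combination mul_pos (sub_pos.2 hab) hR

theorem cos_two_mul_pos_of_mem_Ico {u : ℝ} (hu : u ∈ Set.Ico 0 (π / 4)) : 0 < cos (2 * u) :=
  cos_pos_of_mem_Ioo ⟨by linarith [hu.1, pi_pos], by linarith [hu.2]⟩

theorem strictConcaveOn_phase : StrictConcaveOn ℝ (Set.Ico 0 (π / 4)) phase := by
  refine StrictAntiOn.strictConcaveOn_of_deriv (convex_Ico _ _)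
    (fun u hu => (hasDerivAt_phase (cos_two_mul_pos_of_mem_Ico hu).ne').continuousAt
      |>.continuousWithinAt) ?_
  rw [interior_Ico]
  intro a ha b hb hab
  rw [(hasDerivAt_phase (cos_two_mul_pos_of_mem_Ico (Set.Ioo_subset_Ico_self ha)).ne').deriv,
    (hasDerivAt_phase (cos_two_mul_pos_of_mem_Ico (Set.Ioo_subset_Ico_self hb)).ne').deriv]
  have cos_mem_Icc {u : ℝ} (hu : u ∈ Set.Ioo 0 (π / 4)) : cos u ∈ Set.Icc 0 1 :=
    ⟨cos_nonneg_of_mem_Icc ⟨by linarith [hu.1, pi_pos], by linarith [hu.2, pi_pos]⟩, cos_le_one u⟩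
  exact phaseSlope_strictMonoOn (cos_mem_Icc hb) (cos_mem_Icc ha) <|
    cos_lt_cos_of_nonneg_of_le_pi ha.1.le (by linarith [hb.2, pi_pos]) hab

theorem mul_eq_phase_of_eq_tan {t u : ℝ} (ht0 : 0 < t) (ht2 : t < 2)
    (hu : u ∈ Set.Ioo 0 (π / 4))
    (he : (2 * sin u * cos (2 * u)) / (1 + 2 * sin u * sin (2 * u)) = tan (t * u)) :
    (t + 2) * u = phase u := by
  obtain ⟨hu0, hu4⟩ := hu
  have hcos2 : 0 < cos (2 * u) := cos_two_mul_pos_of_mem_Ico ⟨hu0.le, hu4⟩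
  have hsin : 0 < sin u := sin_pos_of_pos_of_lt_pi hu0 (by linarith [pi_pos])
  have hsin2 : 0 < sin (2 * u) := sin_pos_of_pos_of_lt_pi (by linarith) (by linarith)
  have hcost : 0 < cos (t * u) := cos_pos_of_mem_Ioo ⟨by nlinarith [pi_pos], by nlinarith⟩
  have hden : 0 < 1 + 2 * sin u * sin (2 * u) := by positivity
  have hsin_tu : sin (t * u) = 2 * sin u * cos ((t + 2) * u) := by
    rw [tan_eq_sin_div_cos, div_eq_div_iff hden.ne' hcost.ne'] at he
    rw [add_mul, cos_add]
    linear_combination -he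
  apply eq_arctan_div_of_sin_mul_eq_cos_mul (by positivity) (by nlinarith) (by positivity) hcos2
  rw [show t * u = (t + 2) * u - 2 * u by ring, sin_sub] at hsin_tu
  linear_combination hsin_tu

theorem at_most_one_root (t : ℝ) (ht0 : 0 < t) (ht2 : t < 2) (x y : ℝ)
    (hx : x ∈ Set.Ioo 0 (π / 4)) (hy : y ∈ Set.Ioo 0 (π / 4))
    (hex : (2 * Real.sin x * Real.cos (2 * x)) / (1 + 2 * Real.sin x * Real.sin (2 * x))
      = Real.tan (t * x))
    (hey : (2 * Real.sin y * Real.cos (2 * y)) / (1 + 2 * Real.sin y * Real.sin (2 * y))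
      = Real.tan (t * y)) :
    x = y :=
  strictConcaveOn_phase.eq_of_map_eq_mul ⟨le_rfl, by positivity⟩ (by simp [phase])
    (Set.Ioo_subset_Ico_self hx) (Set.Ioo_subset_Ico_self hy) hx.1.ne' hy.1.ne'
    (mul_eq_phase_of_eq_tan ht0 ht2 hx hex).symm (mul_eq_phase_of_eq_tan ht0 ht2 hy hey).symm
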